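/- arXiv:2210.00748 — 13 statements merged into one kernel-verified Lean document; each statement's English description precedes it below -/
import Mathlib

section
/- Let X be a type, let p be a Mal'tsev operation on X, and let q be a Mal'tsev operation on X that is a homomorphism with respect to p (i.e. satisfies the interchange law q (p a b c) (p a' b' c') (p a'' b'' c'') = p (q a a' a'') (q b b' b'') (q c c' c'') for all arguments). Then q = p, and moreover p is commutative (p x y z = p z y x for all x, y, z) and associative (p x y (p z u v) = p (p x y z) u v for all x, y, z, u, v). -/
/-- a Mal'tsev operation `q` that is a homomorphism with respect to a
Mal'tsev operation `p` on the same type coincides with `p`, and `p` is then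
commutative and associative. -/
theorem maltsev_hom_unique_and_affine {X : Type*} (p q : X → X → X → X)
    (hp₁ : ∀ x y, p x y y = x) (hp₂ : ∀ x y, p y y x = x)
    (hq₁ : ∀ x y, q x y y = x) (hq₂ : ∀ x y, q y y x = x)
    (hhom : ∀ a b c a' b' c' a'' b'' c'',
      q (p a b c) (p a' b' c') (p a'' b'' c'') =
        p (q a a' a'') (q b b' b'') (q c c' c'')) :
    q = p ∧ (∀ x y z, p x y z = p z y x) ∧
      (∀ x y z u v, p x y (p z u v) = p (p x y z) u v) := by
  have hqp : q = p := by
    funext x y z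
    have h := hhom x y y y y y y y z
    simpa [hp₁, hp₂, hq₁, hq₂] using h
  subst hqp
  refine ⟨rfl, ?_, ?_⟩
  · intro x y z
    have h := hhom y y x y y y z y y
    simpa [hp₁, hp₂, hq₁, hq₂] using h
  · intro x y z u v
    have h := hhom x y y y y y z u v
    simpa [hp₁, hp₂, hq₁, hq₂] using h
end

section
/- Let G be a group and let m : G → G → G be a binary operation such that m 1 x = x and m x 1 = x for all x (unital with unit the group identity), m x x = x for all x (idempotent), and m is a group homomorphism from G × G to G, i.e. m (a*a') (b*b') = (m a b) * (m a' b') for all a, a', b, b'. Then G is trivial: every element of G equals 1 (equivalently, G is a subsingleton). -/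
/-- an idempotent unital magma structure (with unit the group identity)
on a group which is a group homomorphism `G × G → G` forces the group to be trivial. -/
theorem idem_magma_on_group_trivial {G : Type*} [Group G] (m : G → G → G)
    (h1 : ∀ x, m 1 x = x) (h2 : ∀ x, m x 1 = x) (hidem : ∀ x, m x x = x)
    (hhom : ∀ a a' b b', m (a * a') (b * b') = m a b * m a' b') :
    ∀ x : G, x = 1 := by
  intro x
  have key : m x x = x * x := by
    have := hhom x 1 1 x
    simpa [h1, h2] using this
  have : x * x = x := by rw [← key, hidem]
  calc x = x * x * x⁻¹ := by group
    _ = x * x⁻¹ := by rw [this]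
    _ = 1 := by group
end

section
/- Let X be a type with a binary operation ∘ and an element e such that e ∘ x = x, x ∘ e = x and x ∘ x = x for all x (an idempotent unital magma), and suppose X carries a group structure whose multiplication m satisfies the interchange law m (a ∘ a') (b ∘ b') = (m a b) ∘ (m a' b') for all a, a', b, b' (i.e. m is a magma homomorphism), with some unit u (m u x = x = m x u), associative, and with every element invertible for m. Then X is trivial: every element of X equals e (equivalently, X is a subsingleton). -/
/-- a group structure on an idempotent unital magma whose multiplication
is a magma homomorphism forces the magma to be trivial. -/
theorem group_on_idem_magma_trivial {X : Type*} (comp : X → X → X) (e : X)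
    (he1 : ∀ x, comp e x = x) (he2 : ∀ x, comp x e = x) (hidem : ∀ x, comp x x = x)
    (m : X → X → X) (u : X)
    (hu1 : ∀ x, m u x = x) (hu2 : ∀ x, m x u = x)
    (hassoc : ∀ a b c, m (m a b) c = m a (m b c))
    (hinv : ∀ x, ∃ y, m x y = u ∧ m y x = u)
    (hhom : ∀ a a' b b', m (comp a a') (comp b b') = comp (m a b) (m a' b')) :
    ∀ x : X, x = e := by
  have hue : u = e := by
    have h := hhom u e e u
    simpa [he1, he2, hu1, hu2, hidem] using h
  have hcm : ∀ a b, m a b = comp a b := by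
    intro a b
    have h := hhom a e e b
    rw [he2, he1, ← hue, hu2, hu1] at h
    exact h
  intro x
  obtain ⟨y, hy1, hy2⟩ := hinv x
  have : m y (m x x) = m y x := by rw [hcm x x, hidem]
  rw [← hassoc, hy2, hu1] at this
  rw [this, hue]
end

section
/- Let X be a topological space, let m : X × X → X be continuous and let e : X be such that m (e, x) = x, m (x, e) = x and m (x, x) = x for all x (a topological idempotent unital magma). Then the fundamental group of X at e is trivial (FundamentalGroup X e is a subsingleton). -/
/-! For a loop `γ` at `e`, concatenation and the pointwise product `m(·, ·)` satisfy the
interchange law, so `γ ⬝ γ = m(γ ⬝ e, e ⬝ γ) ≃ m(γ, γ) = γ`. Every element of `π₁(X, e)` is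
therefore idempotent, hence trivial. -/

namespace Path

variable {X : Type*} [TopologicalSpace X] {m : X × X → X} {e : X}

section PointwiseMul

variable (hm : Continuous m) (he : m (e, e) = e)

def pointwiseMul (p q : Path e e) : Path e e :=
  ((p.prod q).map hm).cast he.symm he.symm

@[simp]
theorem pointwiseMul_apply (p q : Path e e) (t : unitInterval) :
    pointwiseMul hm he p q t = m (p t, q t) :=
  rfl

theorem pointwiseMul_trans (p p' q q' : Path e e) :
    pointwiseMul hm he (p.trans p') (q.trans q') =
      (pointwiseMul hm he p q).trans (pointwiseMul hm he p' q') := by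
  rw [pointwiseMul, ← trans_prod_eq_prod_trans, map_trans]
  rfl

theorem Homotopic.pointwiseMul {p p' q q' : Path e e} (hp : p.Homotopic p')
    (hq : q.Homotopic q') :
    (Path.pointwiseMul hm he p q).Homotopic (Path.pointwiseMul hm he p' q') :=
  have hprod : (p.prod q).Homotopic (p'.prod q') := Nonempty.map2 Homotopic.prodHomotopy hp hq
  (hprod.map ⟨m, hm⟩).pathCast he.symm he.symm

theorem refl_pointwiseMul (h : ∀ x, m (e, x) = x) (p : Path e e) :
    pointwiseMul hm he (refl e) p = p := by
  ext t
  simp [h]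

theorem pointwiseMul_refl (h : ∀ x, m (x, e) = x) (p : Path e e) :
    pointwiseMul hm he p (refl e) = p := by
  ext t
  simp [h]

theorem pointwiseMul_self (h : ∀ x, m (x, x) = x) (p : Path e e) :
    pointwiseMul hm he p p = p := by
  ext t
  simp [h]

end PointwiseMul

theorem trans_self_homotopic (hm : Continuous m) (hleft : ∀ x, m (e, x) = x)
    (hright : ∀ x, m (x, e) = x) (hidem : ∀ x, m (x, x) = x) (γ : Path e e) :
    (γ.trans γ).Homotopic γ := by
  have interchange :
      γ.trans γ = pointwiseMul hm (hidem e) (γ.trans (refl e)) ((refl e).trans γ) := by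
    rw [pointwiseMul_trans, pointwiseMul_refl _ _ hright, refl_pointwiseMul _ _ hleft]
  have h := Homotopic.pointwiseMul hm (hidem e) ⟨Homotopy.transRefl γ⟩ ⟨Homotopy.reflTrans γ⟩
  rwa [← interchange, pointwiseMul_self _ _ hidem] at h

end Path

/-- the fundamental group of a topological idempotent unital magma
at its unit is trivial. -/
theorem fundamentalGroup_of_topological_idem_magma_trivial
    {X : Type*} [TopologicalSpace X] (m : X × X → X) (e : X)
    (hc : Continuous m)
    (h1 : ∀ x, m (e, x) = x) (h2 : ∀ x, m (x, e) = x) (h3 : ∀ x, m (x, x) = x) :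
    Subsingleton (FundamentalGroup X e) := by
  have mul_self : ∀ g : FundamentalGroup X e, g * g = g := by
    intro g
    induction g using Path.Homotopic.Quotient.ind with
    | mk γ => exact Path.Homotopic.Quotient.eq.mpr (γ.trans_self_homotopic hc h1 h2 h3)
  exact ⟨fun a b => by rw [mul_eq_left.mp (mul_self a), mul_eq_left.mp (mul_self b)]⟩
end

section
/- Let (X, ▷, 1) be an implication algebra and let * be a binary operation on X such that (X, *, 1) is also an implication algebra and * satisfies the homomorphism (interchange) law (x ▷ x') * (y ▷ y') = (x * y) ▷ (x' * y') for all x, x', y, y'. Then X is trivial: every element of X equals 1 (equivalently, X is a subsingleton). -/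
/-- the structure of implication algebra is self-trivializing: an
implication algebra structure `*` (with the same constant `1`) on an implication
algebra `(X, ▷, 1)` satisfying the interchange law forces `X` to be trivial. -/
theorem implication_algebra_self_trivializing {X : Type*}
    (imp star : X → X → X) (one : X)
    (h1 : ∀ x, imp x x = one)
    (h2 : ∀ x y, imp (imp x y) x = x)
    (h3 : ∀ x y, imp (imp x y) y = imp (imp y x) x)
    (h4 : ∀ x y z, imp x (imp y z) = imp y (imp x z))
    (g1 : ∀ x, star x x = one)
    (g2 : ∀ x y, star (star x y) x = x)
    (g3 : ∀ x y, star (star x y) y = star (star y x) x)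
    (g4 : ∀ x y z, star x (star y z) = star y (star x z))
    (hhom : ∀ x x' y y',
      star (imp x x') (imp y y') = imp (star x y) (star x' y')) :
    ∀ x : X, x = one := by
  -- 1 is a left unit for imp
  have himp1 : ∀ y, imp one y = y := by
    intro y
    have := h2 y y
    rwa [h1] at this
  -- 1 is a left unit for star
  have hstar1 : ∀ y, star one y = y := by
    intro y
    have := g2 y y
    rwa [g1] at this
  -- a ▷ 1 = 1
  have himptop : ∀ a, imp a one = one := by
    intro a
    have hstep : imp a one = imp (imp a one) (imp a (imp a one)) := by
      conv_lhs => rw [← h1 (imp a one)]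
      exact h4 a (imp a one) (imp a one)
    have h := h2 (imp a one) (imp a (imp a one))
    rw [← hstep, h1] at h
    exact h.symm
  -- a * 1 = 1
  have hstartop : ∀ a, star a one = one := by
    intro a
    have hstep : star a one = star (star a one) (star a (star a one)) := by
      conv_lhs => rw [← g1 (star a one)]
      exact g4 a (star a one) (star a one)
    have h := g2 (star a one) (star a (star a one))
    rw [← hstep, g1] at h
    exact h.symm
  -- (x * y) ▷ y' = y ▷ y'
  have hC : ∀ x y y', imp (star x y) y' = imp y y' := by
    intro x y y'
    have := hhom x one y y'
    rw [himptop, hstar1, hstar1] at this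
    exact this.symm
  -- y ▷ (x * y) = 1
  have hD : ∀ x y, imp y (star x y) = one := by
    intro x y
    have := hhom one x y y
    rw [himp1, h1, hstartop, hstar1] at this
    exact this.symm
  -- star x y = y
  have hE : ∀ x y, star x y = y := by
    intro x y
    have := h3 (star x y) y
    rw [hC, h1, himp1, hD, himp1] at this
    exact this.symm
  intro x
  have := g1 x
  rwa [hE] at this
end

section
/- Let (X, ·, e) be a unital magma and let s : X → X → X be an opimplicative subtraction on X with constant e (i.e. s x x = e, s x e = x and s e x = e for all x) which satisfies the homomorphism (interchange) law s (x · x') (y · y') = (s x y) · (s x' y') for all x, x', y, y'. Then X is trivial: every element of X equals e (equivalently, X is a subsingleton). -/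
/-- an opimplicative subtraction (with constant the unit) on a unital
magma which satisfies the interchange law forces the magma to be trivial. -/
theorem opimplicative_subtraction_trivializes_magma {X : Type*}
    (mul : X → X → X) (e : X)
    (he1 : ∀ x, mul e x = x) (he2 : ∀ x, mul x e = x)
    (s : X → X → X)
    (hs1 : ∀ x, s x x = e) (hs2 : ∀ x, s x e = x) (hs3 : ∀ x, s e x = e)
    (hhom : ∀ x x' y y', s (mul x x') (mul y y') = mul (s x y) (s x' y')) :
    ∀ x : X, x = e := by
  intro x
  have h := hhom e x x e
  rw [he1, he2, hs1, hs3, hs2, he1] at h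
  exact h.symm
end

section
/- Let X be a topological space, let s : X × X → X be continuous and let c : X be such that s (x, x) = c, s (x, c) = x and s (c, x) = c for all x (a topological opimplicative subtraction). Then the fundamental group of X at c is trivial (FundamentalGroup X c is a subsingleton). -/
/-! `s` induces a homomorphism `φ : π₁(X, c) × π₁(X, c) →* π₁(X, c)` with `φ (a, 1) = a`,
`φ (1, a) = 1` and `φ (a, a) = 1`, so every loop class is `a = φ (a, 1) * φ (1, a) = φ (a, a) = 1`. -/

namespace FundamentalGroup

variable {X Y Z : Type*} [TopologicalSpace X] [TopologicalSpace Y] [TopologicalSpace Z]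

noncomputable def prodHom (x : X) (y : Y) :
    FundamentalGroup X x × FundamentalGroup Y y →* FundamentalGroup (X × Y) (x, y) where
  toFun p := fromPath (Path.Homotopic.prod p.1.toPath p.2.toPath)
  map_one' := rfl
  map_mul' _ _ := (Path.Homotopic.comp_prod_eq_prod_comp _ _ _ _).symm

noncomputable def map₂ (f : C(X × Y, Z)) {x : X} {y : Y} {z : Z} (h : f (x, y) = z) :
    FundamentalGroup X x × FundamentalGroup Y y →* FundamentalGroup Z z :=
  (mapOfEq f h).comp (prodHom x y)

theorem map₂_mk_of_forall (f : C(X × Y, Z)) {x : X} {y : Y} {z : Z} (h : f (x, y) = z)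
    {p : Path x x} {q : Path y y} {r : Path z z} (hr : ∀ t, f (p t, q t) = r t) :
    map₂ f h (fromPath (.mk p), fromPath (.mk q)) = fromPath (.mk r) :=
  (mapOfEq_apply f h _).trans (congrArg _ (Path.ext (funext hr)))

end FundamentalGroup

theorem MonoidHom.eq_one_of_map_diag_eq_one {M : Type*} [Monoid M] (φ : M × M →* M)
    (hl : ∀ a, φ (a, 1) = a) (hr : ∀ a, φ (1, a) = 1) (hd : ∀ a, φ (a, a) = 1) (a : M) :
    a = 1 :=
  calc a = φ (a, 1) * φ (1, a) := by rw [hl, hr, mul_one]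
    _ = φ (a, a) := by rw [← map_mul, Prod.mk_mul_mk, mul_one, one_mul]
    _ = 1 := hd a

/-- the fundamental group of a topological opimplicative subtraction
at its constant is trivial. -/
theorem fundamentalGroup_of_topological_opimplicative_subtraction_trivial
    {X : Type*} [TopologicalSpace X] (s : X × X → X) (c : X)
    (hc : Continuous s)
    (h1 : ∀ x, s (x, x) = c) (h2 : ∀ x, s (x, c) = x) (h3 : ∀ x, s (c, x) = c) :
    Subsingleton (FundamentalGroup X c) := by
  let φ := FundamentalGroup.map₂ ⟨s, hc⟩ (h1 c)
  refine subsingleton_of_forall_eq 1 (φ.eq_one_of_map_diag_eq_one ?_ ?_ ?_)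
  all_goals rintro ⟨p⟩
  · exact FundamentalGroup.map₂_mk_of_forall _ _ (q := .refl c) fun t => h2 (p t)
  · exact FundamentalGroup.map₂_mk_of_forall _ _ (p := .refl c) (r := .refl c) fun t => h3 (p t)
  · exact FundamentalGroup.map₂_mk_of_forall _ _ (r := .refl c) fun t => h1 (p t)
end

section
/- Let X be a topological space and let p : X × X × X → X be a continuous map which is a Mal'tsev operation (p (x, y, y) = x and p (y, y, x) = x for all x, y) satisfying the Pixley axiom p (x, y, x) = x for all x, y. Then for every point x₀ of X the fundamental group of X at x₀ is trivial (FundamentalGroup X x₀ is a subsingleton). -/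
/-!
Given a loop `γ` at `x₀`, the map `(s, t) ↦ p (γ t, γ (s * t), x₀)` contracts it: at `s = 0` it is
`p (γ t, x₀, x₀) = γ t`, at `s = 1` it is `p (γ t, γ t, x₀) = x₀`, and the Pixley axiom
`p (x₀, y, x₀) = x₀` keeps both endpoints at `x₀` throughout.
-/

namespace Path

variable {X : Type*} [TopologicalSpace X] {p : X × X × X → X} {x₀ : X}

def Homotopy.ofPixleyMaltsev (hc : Continuous p) (h1 : ∀ x y, p (x, y, y) = x)
    (h2 : ∀ x y, p (y, y, x) = x) (hpix : ∀ x y, p (x, y, x) = x) (γ : Path x₀ x₀) :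
    Path.Homotopy γ (Path.refl x₀) where
  toFun st := p (γ st.2, γ (st.1 * st.2), x₀)
  continuous_toFun := by fun_prop
  map_zero_left t := by simp [h1]
  map_one_left t := by simp [h2]
  prop' s t ht := by
    rcases ht with rfl | rfl <;> simp [hpix]

theorem Homotopic.subsingleton_quotient_of_forall_homotopic_refl
    (h : ∀ γ : Path x₀ x₀, γ.Homotopic (Path.refl x₀)) :
    Subsingleton (Path.Homotopic.Quotient x₀ x₀) :=
  ⟨fun a b => by
    induction a, b using Path.Homotopic.Quotient.ind₂ with
    | mk α β => exact Quotient.sound ((h α).trans (h β).symm)⟩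

end Path

/-- the fundamental group, at any point, of a topological Mal'tsev
algebra satisfying the Pixley axiom is trivial. -/
theorem fundamentalGroup_of_topological_pixley_maltsev_trivial
    {X : Type*} [TopologicalSpace X] (p : X × X × X → X)
    (hc : Continuous p)
    (h1 : ∀ x y, p (x, y, y) = x) (h2 : ∀ x y, p (y, y, x) = x)
    (hpix : ∀ x y, p (x, y, x) = x) :
    ∀ x₀ : X, Subsingleton (FundamentalGroup X x₀) := fun _ =>
  Path.Homotopic.subsingleton_quotient_of_forall_homotopic_refl fun γ =>
    ⟨Path.Homotopy.ofPixleyMaltsev hc h1 h2 hpix γ⟩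
end

section
/- Fix k ≥ 1. Let A, B, W be types, each equipped with a constant 0 and ternary operations p₁, …, p_{2k+1}, and suppose the operations on A and on B satisfy the CHyper identities of type 2k+1. Let f : W → A, g : W → B, s : A → W, t : B → W be maps preserving 0 and each operation pᵢ, with f ∘ s = id, g ∘ t = id, f (t b) = 0 for all b, and g (s a) = 0 for all a (a punctual span). Let T be an equivalence relation on W compatible with each pᵢ (if wⱼ T wⱼ' for j = 1, 2, 3 then pᵢ (w₁, w₂, w₃) T pᵢ (w₁', w₂', w₃')) and such that f w = f w' and g w = g w' together imply w T w'. Then for all w, w' in W: if f w = f w' and t (g w) T t (g w'), then w T w'. -/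
/-- The CHyper identities of type `2k+1` for a constant `z` and ternary operations
`p 1, …, p (2k+1)` on a type. -/
def CHyperIdentities {X : Type*} (k : ℕ) (z : X) (p : ℕ → X → X → X → X) : Prop :=
  (∀ a, p 1 a z z = a) ∧
  (∀ i, 2 ≤ i → i ≤ 2 * k → ∀ a, p i a z a = a) ∧
  (∀ a, p (2 * k + 1) z z a = a) ∧
  (∀ i, 1 ≤ i → i ≤ k → ∀ a b, p (2 * i - 1) a a b = p (2 * i) a a b) ∧
  (∀ i, 1 ≤ i → i ≤ k → ∀ a b, p (2 * i) a b b = p (2 * i + 1) a b b) ∧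
  (∀ i, 1 ≤ i → i ≤ 2 * k + 1 → ∀ b, p i b b b = b)

/-- a pointed variety with CHyper terms of type `2k+1` is congruence
hyperextensible: element-level statement for a punctual span `(f, g, s, t)` and an
equivalence relation `T` on `W` with `R[f] ∩ R[g] ⊆ T`, one has
`R[f] ∩ g⁻¹(t⁻¹(T)) ⊆ T`. -/
theorem chyper_congruence_hyperextensible {A B W : Type*} (k : ℕ) (hk : 1 ≤ k)
    (zA : A) (zB : B) (zW : W)
    (pA : ℕ → A → A → A → A) (pB : ℕ → B → B → B → B) (pW : ℕ → W → W → W → W)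
    (hA : CHyperIdentities k zA pA) (hB : CHyperIdentities k zB pB)
    (f : W → A) (g : W → B) (s : A → W) (t : B → W)
    (hf0 : f zW = zA) (hg0 : g zW = zB) (hs0 : s zA = zW) (ht0 : t zB = zW)
    (hfp : ∀ i, 1 ≤ i → i ≤ 2 * k + 1 → ∀ w₁ w₂ w₃,
      f (pW i w₁ w₂ w₃) = pA i (f w₁) (f w₂) (f w₃))
    (hgp : ∀ i, 1 ≤ i → i ≤ 2 * k + 1 → ∀ w₁ w₂ w₃,
      g (pW i w₁ w₂ w₃) = pB i (g w₁) (g w₂) (g w₃))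
    (hsp : ∀ i, 1 ≤ i → i ≤ 2 * k + 1 → ∀ a₁ a₂ a₃,
      s (pA i a₁ a₂ a₃) = pW i (s a₁) (s a₂) (s a₃))
    (htp : ∀ i, 1 ≤ i → i ≤ 2 * k + 1 → ∀ b₁ b₂ b₃,
      t (pB i b₁ b₂ b₃) = pW i (t b₁) (t b₂) (t b₃))
    (hfs : ∀ a, f (s a) = a) (hgt : ∀ b, g (t b) = b)
    (hft : ∀ b, f (t b) = zA) (hgs : ∀ a, g (s a) = zB)
    (T : W → W → Prop) (hT : Equivalence T)
    (hTcomp : ∀ i, 1 ≤ i → i ≤ 2 * k + 1 → ∀ w₁ w₂ w₃ w₁' w₂' w₃',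
      T w₁ w₁' → T w₂ w₂' → T w₃ w₃' → T (pW i w₁ w₂ w₃) (pW i w₁' w₂' w₃'))
    (hRfg : ∀ w w', f w = f w' → g w = g w' → T w w') :
    ∀ w w', f w = f w' → T (t (g w)) (t (g w')) → T w w' := by
  obtain ⟨hA1, hA2, hA3, hA4, hA5, hA6⟩ := hA
  obtain ⟨hB1, hB2, hB3, hB4, hB5, hB6⟩ := hB
  intro w w' hfww hTt
  -- f-images of the X and Y elements
  have fX : ∀ j, 2 ≤ j → j ≤ 2 * k → f (pW j w (t (g w)) w') = f w := by
    intro j hj1 hj2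
    rw [hfp j (by omega) (by omega), hft, ← hfww, hA2 j hj1 hj2]
  have fY : ∀ j, 2 ≤ j → j ≤ 2 * k → f (pW j w (t (g w')) w') = f w := by
    intro j hj1 hj2
    rw [hfp j (by omega) (by omega), hft, ← hfww, hA2 j hj1 hj2]
  have gX : ∀ j, 1 ≤ j → j ≤ 2 * k + 1 →
      g (pW j w (t (g w)) w') = pB j (g w) (g w) (g w') := by
    intro j hj1 hj2
    rw [hgp j hj1 hj2, hgt]
  have gY : ∀ j, 1 ≤ j → j ≤ 2 * k + 1 →
      g (pW j w (t (g w')) w') = pB j (g w) (g w') (g w') := by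
    intro j hj1 hj2
    rw [hgp j hj1 hj2, hgt]
  -- main induction: T w (pW (2i) w (t (g w)) w') for 1 ≤ i ≤ k
  have main : ∀ i, 1 ≤ i → i ≤ k → T w (pW (2 * i) w (t (g w)) w') := by
    intro i hi1 hi2
    induction i with
    | zero => omega
    | succ n ih =>
      rcases Nat.eq_zero_or_pos n with hn | hn
      · -- base case : i = 1
        subst hn
        -- c0 = pW 1 w (t b) (t b)
        have h1 : T w (pW 1 w (t (g w)) (t (g w))) := by
          apply hRfg
          · rw [hfp 1 (by omega) (by omega), hft, hA1]
          · rw [hgp 1 (by omega) (by omega), hgt, hB6 1 (by omega) (by omega)]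
        have h2 : T (pW 1 w (t (g w)) (t (g w))) (pW 1 w (t (g w)) (t (g w'))) :=
          hTcomp 1 (by omega) (by omega) _ _ _ _ _ _ (hT.refl _) (hT.refl _) hTt
        have h3 : T (pW 1 w (t (g w)) (t (g w'))) (pW (2 * 1) w (t (g w)) w') := by
          apply hRfg
          · rw [hfp 1 (by omega) (by omega), hft, hft, hA1,
              fX (2 * 1) (by omega) (by omega)]
          · rw [hgp 1 (by omega) (by omega), hgt, hgt,
              gX (2 * 1) (by omega) (by omega)]
            have := hB4 1 (by omega) (by omega) (g w) (g w')
            simpa using this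
        exact hT.trans h1 (hT.trans h2 h3)
      · -- step : from 2n to 2n + 2, with 1 ≤ n and n + 1 ≤ k
        have ihn : T w (pW (2 * n) w (t (g w)) w') := ih hn (by omega)
        have s1 : T (pW (2 * n) w (t (g w)) w') (pW (2 * n) w (t (g w')) w') :=
          hTcomp (2 * n) (by omega) (by omega) _ _ _ _ _ _ (hT.refl _) hTt (hT.refl _)
        have s2 : T (pW (2 * n) w (t (g w')) w') (pW (2 * n + 1) w (t (g w')) w') := by
          apply hRfg
          · rw [fY (2 * n) (by omega) (by omega), fY (2 * n + 1) (by omega) (by omega)]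
          · rw [gY (2 * n) (by omega) (by omega), gY (2 * n + 1) (by omega) (by omega)]
            exact hB5 n (by omega) (by omega) (g w) (g w')
        have s3 : T (pW (2 * n + 1) w (t (g w')) w') (pW (2 * n + 1) w (t (g w)) w') :=
          hTcomp (2 * n + 1) (by omega) (by omega) _ _ _ _ _ _ (hT.refl _)
            (hT.symm hTt) (hT.refl _)
        have s4 : T (pW (2 * n + 1) w (t (g w)) w') (pW (2 * (n + 1)) w (t (g w)) w') := by
          apply hRfg
          · rw [fX (2 * n + 1) (by omega) (by omega),
              fX (2 * (n + 1)) (by omega) (by omega)]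
          · rw [gX (2 * n + 1) (by omega) (by omega),
              gX (2 * (n + 1)) (by omega) (by omega)]
            have := hB4 (n + 1) (by omega) (by omega) (g w) (g w')
            rwa [show 2 * (n + 1) - 1 = 2 * n + 1 from by omega] at this
        exact hT.trans ihn (hT.trans s1 (hT.trans s2 (hT.trans s3 s4)))
  have h2k : T w (pW (2 * k) w (t (g w)) w') := main k hk le_rfl
  -- final steps
  have e1 : T (pW (2 * k) w (t (g w)) w') (pW (2 * k) w (t (g w')) w') :=
    hTcomp (2 * k) (by omega) (by omega) _ _ _ _ _ _ (hT.refl _) hTt (hT.refl _)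
  have e2 : T (pW (2 * k) w (t (g w')) w') (pW (2 * k + 1) (t (g w)) (t (g w')) w') := by
    apply hRfg
    · rw [fY (2 * k) (by omega) (by omega),
        hfp (2 * k + 1) (by omega) (by omega), hft, hft, hA3, hfww]
    · rw [gY (2 * k) (by omega) (by omega),
        hgp (2 * k + 1) (by omega) (by omega), hgt, hgt]
      exact hB5 k (by omega) le_rfl (g w) (g w')
  have e3 : T (pW (2 * k + 1) (t (g w)) (t (g w')) w')
      (pW (2 * k + 1) (t (g w')) (t (g w')) w') :=
    hTcomp (2 * k + 1) (by omega) (by omega) _ _ _ _ _ _ hTt (hT.refl _) (hT.refl _)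
  have e4 : T (pW (2 * k + 1) (t (g w')) (t (g w')) w') w' := by
    apply hRfg
    · rw [hfp (2 * k + 1) (by omega) (by omega), hft, hA3]
    · rw [hgp (2 * k + 1) (by omega) (by omega), hgt,
        hB6 (2 * k + 1) (by omega) (by omega)]
  exact hT.trans h2k (hT.trans e1 (hT.trans e2 (hT.trans e3 e4)))
end

section
/- Fix k ≥ 1 and 1 ≤ j ≤ k. Let X be a type with a constant 0 and ternary operations p₁, …, p_{2k+1} satisfying the CHyper identities of type 2k+1. Define ternary operations q₁, …, q_{2k+3} on X by: qᵢ = pᵢ for 1 ≤ i ≤ 2j; q_{2j+1} = q_{2j+2} = p_{2j}; and qᵢ = p_{i−2} for 2j+3 ≤ i ≤ 2k+3. Then q₁, …, q_{2k+3} satisfy the CHyper identities of type 2k+3. -/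
/-- any CHyper structure of type `2k+1` yields one of type `2k+3`,
via `qᵢ = pᵢ` for `1 ≤ i ≤ 2j`, `q_{2j+1} = q_{2j+2} = p_{2j}`, and `qᵢ = p_{i-2}`
for `2j+3 ≤ i ≤ 2k+3`. -/
theorem chyper_type_succ {X : Type*} (k j : ℕ) (hk : 1 ≤ k)
    (hj1 : 1 ≤ j) (hjk : j ≤ k)
    (z : X) (p : ℕ → X → X → X → X) (hp : CHyperIdentities k z p)
    (q : ℕ → X → X → X → X)
    (hq1 : ∀ i, 1 ≤ i → i ≤ 2 * j → q i = p i)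
    (hq2 : q (2 * j + 1) = p (2 * j))
    (hq3 : q (2 * j + 2) = p (2 * j))
    (hq4 : ∀ i, 2 * j + 3 ≤ i → i ≤ 2 * k + 3 → q i = p (i - 2)) :
    CHyperIdentities (k + 1) z q := by
  obtain ⟨hp1, hp2, hp3, hp4, hp5, hp6⟩ := hp
  refine ⟨?_, ?_, ?_, ?_, ?_, ?_⟩
  · intro a
    rw [hq1 1 le_rfl (by omega)]
    exact hp1 a
  · intro i h2 hik a
    rcases le_or_gt i (2 * j) with h | h
    · rw [hq1 i (by omega) h]; exact hp2 i h2 (by omega) a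
    · rcases eq_or_lt_of_le (show 2 * j + 1 ≤ i by omega) with h' | h'
      · rw [← h', hq2]; exact hp2 (2 * j) (by omega) (by omega) a
      · rcases eq_or_lt_of_le (show 2 * j + 2 ≤ i by omega) with h'' | h''
        · rw [← h'', hq3]; exact hp2 (2 * j) (by omega) (by omega) a
        · rw [hq4 i (by omega) (by omega)]
          exact hp2 (i - 2) (by omega) (by omega) a
  · intro a
    rw [show 2 * (k + 1) + 1 = 2 * k + 3 by ring, hq4 (2 * k + 3) (by omega) le_rfl,
      show 2 * k + 3 - 2 = 2 * k + 1 by omega]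
    exact hp3 a
  · intro i h1 hik a b
    rcases le_or_gt i j with h | h
    · rw [hq1 (2 * i - 1) (by omega) (by omega), hq1 (2 * i) (by omega) (by omega)]
      exact hp4 i h1 (by omega) a b
    · rcases eq_or_lt_of_le (show j + 1 ≤ i by omega) with h' | h'
      · rw [show 2 * i - 1 = 2 * j + 1 by omega, show 2 * i = 2 * j + 2 by omega, hq2, hq3]
      · rw [hq4 (2 * i - 1) (by omega) (by omega), hq4 (2 * i) (by omega) (by omega),
          show 2 * i - 1 - 2 = 2 * (i - 1) - 1 by omega, show 2 * i - 2 = 2 * (i - 1) by omega]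
        exact hp4 (i - 1) (by omega) (by omega) a b
  · intro i h1 hik a b
    rcases lt_or_ge i j with h | h
    · rw [hq1 (2 * i) (by omega) (by omega), hq1 (2 * i + 1) (by omega) (by omega)]
      exact hp5 i h1 (by omega) a b
    · rcases eq_or_lt_of_le h with h' | h'
      · rw [← h', hq1 (2 * j) (by omega) le_rfl, hq2]
      · rcases eq_or_lt_of_le (show j + 1 ≤ i by omega) with h'' | h''
        · rw [← h'', show 2 * (j + 1) + 1 = 2 * j + 3 by ring, show 2 * (j + 1) = 2 * j + 2 by ring, hq3, hq4 (2 * j + 3) le_rfl (by omega),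
            show 2 * j + 3 - 2 = 2 * j + 1 by omega]
          exact hp5 j hj1 hjk a b
        · rw [hq4 (2 * i) (by omega) (by omega), hq4 (2 * i + 1) (by omega) (by omega),
            show 2 * i - 2 = 2 * (i - 1) by omega, show 2 * i + 1 - 2 = 2 * (i - 1) + 1 by omega]
          exact hp5 (i - 1) (by omega) (by omega) a b
  · intro i h1 hik b
    rcases le_or_gt i (2 * j) with h | h
    · rw [hq1 i h1 h]; exact hp6 i h1 (by omega) b
    · rcases eq_or_lt_of_le (show 2 * j + 1 ≤ i by omega) with h' | h'
      · rw [← h', hq2]; exact hp6 (2 * j) (by omega) (by omega) b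
      · rcases eq_or_lt_of_le (show 2 * j + 2 ≤ i by omega) with h'' | h''
        · rw [← h'', hq3]; exact hp6 (2 * j) (by omega) (by omega) b
        · rw [hq4 i (by omega) (by omega)]
          exact hp6 (i - 2) (by omega) (by omega) b
end

section
/- Let G be a group and define on G the ternary operations p₁ x y z = x * y⁻¹ * z, p₂ x y z = z, p₃ x y z = z, with constant 1. Then (G, 1, p₁, p₂, p₃) satisfies the Hex₃ identities. Moreover, for any two groups G and H, a function f : G → H satisfies f 1 = 1 and f (x * y⁻¹ * z) = f x * (f y)⁻¹ * f z for all x, y, z if and only if f is a group homomorphism (f (a * b) = f a * f b for all a, b). -/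
/-- The Hex₃ identities for a constant `z` and ternary operations `p₁, p₂, p₃`. -/
def Hex3Identities {X : Type*} (z : X) (p₁ p₂ p₃ : X → X → X → X) : Prop :=
  (∀ a, p₁ a z z = a) ∧ (∀ a, p₂ a z a = a) ∧ (∀ a, p₃ z z a = a) ∧
  (∀ a b, p₁ a a b = p₂ a a b) ∧ (∀ a b, p₂ a b b = p₃ a b b) ∧
  (∀ b, p₁ b b b = b) ∧ (∀ b, p₂ b b b = b) ∧ (∀ b, p₃ b b b = b)

/-- `(G, 1, x*y⁻¹*z, z, z)` is a Hex₃-algebra, and a map between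
groups preserves this structure iff it is a group homomorphism. -/
theorem group_hex3_structure {G H : Type*} [Group G] [Group H] (f : G → H) :
    Hex3Identities (1 : G)
      (fun x y z => x * y⁻¹ * z) (fun _ _ z => z) (fun _ _ z => z) ∧
    ((f 1 = 1 ∧ ∀ x y z : G, f (x * y⁻¹ * z) = f x * (f y)⁻¹ * f z) ↔
      ∀ a b : G, f (a * b) = f a * f b) := by
  constructor
  · refine ⟨fun a => by group, fun a => rfl, fun a => by group, fun a b => by group,
      fun a b => rfl, fun b => by group, fun b => rfl, fun b => rfl⟩
  · constructor
    · rintro ⟨h1, hp⟩ a b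
      have := hp a 1 b
      simpa [h1] using this
    · intro hf
      have h1 : f 1 = 1 := by
        have := hf 1 1
        simpa using this
      refine ⟨h1, fun x y z => ?_⟩
      have hinv : ∀ y : G, f y⁻¹ = (f y)⁻¹ := by
        intro y
        have := hf y y⁻¹
        simp [h1] at this
        exact eq_inv_of_mul_eq_one_right this.symm
      rw [hf, hf, hinv]
end

section
/- Let K be a field with (2 : K) ≠ 0, let V be a K-vector space, and let P be an additive torsor over V (an affine space over V). Define on P the ternary operations q₁ x y z = (2 : K)⁻¹ • (z −ᵥ y) +ᵥ x, q₂ x y z = (2 : K)⁻¹ • (z −ᵥ x) +ᵥ x, q₃ x y z = (2 : K)⁻¹ • (x −ᵥ y) +ᵥ z, and let p x y z = (x −ᵥ y) +ᵥ z. Then (P, q₁, q₂, q₃) satisfies the CM₃ identities, and p is a homomorphism with respect to each qᵢ: qᵢ (p x y z) (p x' y' z') (p x'' y'' z'') = p (qᵢ x x' x'') (qᵢ y y' y'') (qᵢ z z' z'') for i = 1, 2, 3 and all arguments. -/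
/-- The CM₃ identities for ternary operations `p₁, p₂, p₃` on a type. -/
def CM3Identities {X : Type*} (p₁ p₂ p₃ : X → X → X → X) : Prop :=
  (∀ a b, p₁ a b b = a) ∧ (∀ a b, p₂ a b a = a) ∧ (∀ a b, p₃ b b a = a) ∧
  (∀ a b, p₁ a a b = p₂ a a b) ∧ (∀ a b, p₂ a b b = p₃ a b b)

/-- for an affine space `P` over a `K`-vector space `V`, with
`(2 : K) ≠ 0`, the operations `q₁ x y z = 2⁻¹ • (z -ᵥ y) +ᵥ x`,
`q₂ x y z = 2⁻¹ • (z -ᵥ x) +ᵥ x`, `q₃ x y z = 2⁻¹ • (x -ᵥ y) +ᵥ z` satisfy the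
CM₃ identities, and `p x y z = (x -ᵥ y) +ᵥ z` is a homomorphism with respect to
each `qᵢ`. -/
theorem affine_space_cm3_structure {K V P : Type*} [Field K]
    [AddCommGroup V] [Module K V] [AddTorsor V P] (h2 : (2 : K) ≠ 0) :
    let q₁ : P → P → P → P := fun x y z => (2 : K)⁻¹ • (z -ᵥ y) +ᵥ x
    let q₂ : P → P → P → P := fun x _ z => (2 : K)⁻¹ • (z -ᵥ x) +ᵥ x
    let q₃ : P → P → P → P := fun x y z => (2 : K)⁻¹ • (x -ᵥ y) +ᵥ z
    let p : P → P → P → P := fun x y z => (x -ᵥ y) +ᵥ z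
    CM3Identities q₁ q₂ q₃ ∧
    ∀ x y z x' y' z' x'' y'' z'' : P,
      q₁ (p x y z) (p x' y' z') (p x'' y'' z'') =
        p (q₁ x x' x'') (q₁ y y' y'') (q₁ z z' z'') ∧
      q₂ (p x y z) (p x' y' z') (p x'' y'' z'') =
        p (q₂ x x' x'') (q₂ y y' y'') (q₂ z z' z'') ∧
      q₃ (p x y z) (p x' y' z') (p x'' y'' z'') =
        p (q₃ x x' x'') (q₃ y y' y'') (q₃ z z' z'') := by
  intro q₁ q₂ q₃ p
  obtain ⟨o⟩ := (inferInstance : AddTorsor V P).nonempty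
  constructor
  · refine ⟨?_, ?_, ?_, ?_, ?_⟩ <;> intro a b <;>
      obtain ⟨va, rfl⟩ := (Equiv.vaddConst o).surjective a <;>
      obtain ⟨vb, rfl⟩ := (Equiv.vaddConst o).surjective b <;>
      simp only [Equiv.coe_vaddConst] <;>
      rw [← vsub_eq_zero_iff_eq] <;>
      simp only [q₁, q₂, q₃, p, vadd_vadd, vadd_vsub_vadd_cancel_right] <;>
      match_scalars <;> field_simp <;> ring
  · intro x y z x' y' z' x'' y'' z''
    obtain ⟨vx, rfl⟩ := (Equiv.vaddConst o).surjective x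
    obtain ⟨vy, rfl⟩ := (Equiv.vaddConst o).surjective y
    obtain ⟨vz, rfl⟩ := (Equiv.vaddConst o).surjective z
    obtain ⟨vx', rfl⟩ := (Equiv.vaddConst o).surjective x'
    obtain ⟨vy', rfl⟩ := (Equiv.vaddConst o).surjective y'
    obtain ⟨vz', rfl⟩ := (Equiv.vaddConst o).surjective z'
    obtain ⟨vx'', rfl⟩ := (Equiv.vaddConst o).surjective x''
    obtain ⟨vy'', rfl⟩ := (Equiv.vaddConst o).surjective y''
    obtain ⟨vz'', rfl⟩ := (Equiv.vaddConst o).surjective z''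
    refine ⟨?_, ?_, ?_⟩ <;>
      simp only [Equiv.coe_vaddConst] <;>
      rw [← vsub_eq_zero_iff_eq] <;>
      simp only [q₁, q₂, q₃, p, vadd_vadd, vadd_vsub_vadd_cancel_right] <;>
      match_scalars <;> field_simp <;> ring
end

section
/- Let X be a type and let p be an affine operation on X, i.e. a Mal'tsev operation which is commutative (p x y z = p z y x for all x, y, z) and associative (p x y (p z u v) = p (p x y z) u v for all x, y, z, u, v). Then p is a homomorphism with respect to itself: p (p a b c) (p a' b' c') (p a'' b'' c'') = p (p a a' a'') (p b b' b'') (p c c' c'') for all arguments. -/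
/-- an affine operation (a commutative and associative Mal'tsev
operation) is a homomorphism with respect to itself. -/
theorem affine_operation_self_hom {X : Type*} (p : X → X → X → X)
    (hp₁ : ∀ x y, p x y y = x) (hp₂ : ∀ x y, p y y x = x)
    (hcomm : ∀ x y z, p x y z = p z y x)
    (hassoc : ∀ x y z u v, p x y (p z u v) = p (p x y z) u v) :
    ∀ a b c a' b' c' a'' b'' c'',
      p (p a b c) (p a' b' c') (p a'' b'' c'') =
        p (p a a' a'') (p b b' b'') (p c c' c'') := by
  intro a b c a' b' c' a'' b'' c''
  letI : Zero X := ⟨b⟩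
  letI : Add X := ⟨fun x y => p x b y⟩
  letI : Neg X := ⟨fun x => p b x b⟩
  letI : AddCommGroup X :=
    { add := (· + ·)
      zero := (0 : X)
      neg := (- ·)
      nsmul := nsmulRec
      zsmul := zsmulRec
      add_assoc := fun x y z => (hassoc x b y b z).symm
      zero_add := fun x => hp₂ x b
      add_zero := fun x => hp₁ x b
      add_comm := fun x y => hcomm x b y
      neg_add_cancel := fun x => by
        show p (p b x b) b x = b
        rw [← hassoc, hp₂, hp₁] }
  have key : ∀ x y z, p x y z = x - y + z := by
    intro x y z
    rw [sub_eq_add_neg]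
    show p x y z = p (p x b (p b y b)) b z
    rw [hassoc, hp₁, ← hassoc, hp₂]
  simp only [key]
  abel
end
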